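/- arXiv:1709.08424 — 6 statements merged into one kernel-verified Lean document; each statement's English description precedes it below -/
import Mathlib

section
/- Let C be a bounded subset of a finite-dimensional real normed vector space V, and let A, B be closed cones in V with (-A) ∩ B = {0}. Then the set (C - A) ∩ B is bounded. -/
/-!
The unit vectors of `B` form a compact set disjoint from the closed set `-A`, hence at distance
at least some `δ > 0` from it. Rescaling by `‖b‖` (both sets are cones) gives
`δ ‖b‖ ≤ ‖b + a‖` for all `b ∈ B`, `a ∈ A`. If `x = c - a ∈ B` with `c ∈ C`, `a ∈ A`, then
`δ ‖x‖ ≤ ‖x + a‖ = ‖c‖`, which is bounded.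
-/

open scoped Pointwise

open Metric

theorem exists_pos_forall_lt_dist {α : Type*} [PseudoMetricSpace α] {s t : Set α}
    (hs : IsCompact s) (ht : IsClosed t) (hst : Disjoint s t) :
    ∃ δ > 0, ∀ x ∈ s, ∀ y ∈ t, δ < dist x y := by
  obtain ⟨r, hr, hlt⟩ := Metric.exists_pos_forall_lt_edist hs ht hst
  refine ⟨r, hr, fun x hx y hy => ?_⟩
  have := hlt x hx y hy
  rw [edist_dist, ENNReal.coe_nnreal_eq] at this
  exact (ENNReal.ofReal_lt_ofReal_iff_of_nonneg r.2).mp this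

theorem exists_pos_mul_norm_le_norm_add_of_cones
    {V : Type*} [NormedAddCommGroup V] [NormedSpace ℝ V] [ProperSpace V] {A B : Set V}
    (hAclosed : IsClosed A) (hBclosed : IsClosed B)
    (hAsmul : ∀ (c : ℝ), 0 ≤ c → ∀ x ∈ A, c • x ∈ A)
    (hBsmul : ∀ (c : ℝ), 0 ≤ c → ∀ x ∈ B, c • x ∈ B)
    (hAB : (-A) ∩ B = {0}) :
    ∃ δ > 0, ∀ b ∈ B, ∀ a ∈ A, δ * ‖b‖ ≤ ‖b + a‖ := by
  have hdisj : Disjoint (sphere (0 : V) 1 ∩ B) (-A) := by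
    refine Set.disjoint_left.mpr fun u ⟨hu1, huB⟩ huA => ?_
    have hu0 : u ∈ ({0} : Set V) := hAB ▸ ⟨huA, huB⟩
    simp [Set.mem_singleton_iff.mp hu0] at hu1
  obtain ⟨δ, hδ, hsep⟩ :=
    exists_pos_forall_lt_dist ((isCompact_sphere 0 1).inter_right hBclosed) hAclosed.neg hdisj
  refine ⟨δ, hδ, fun b hb a ha => ?_⟩
  rcases eq_or_ne b 0 with rfl | hb0
  · simp
  have hnorm : 0 < ‖b‖ := norm_pos_iff.mpr hb0
  have hunit : ‖b‖⁻¹ • b ∈ sphere (0 : V) 1 ∩ B :=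
    ⟨by simp [norm_smul, hnorm.ne'], hBsmul _ (by positivity) b hb⟩
  have hneg : -(‖b‖⁻¹ • a) ∈ -A := by simpa using hAsmul _ (by positivity) a ha
  have key : δ < ‖b‖⁻¹ * ‖b + a‖ := by
    simpa [dist_eq_norm, ← smul_add, norm_smul] using hsep _ hunit _ hneg
  rw [inv_mul_eq_div, lt_div_iff₀ hnorm] at key
  exact key.le

theorem bounded_inter_of_closed_cones_general
    {V : Type*} [NormedAddCommGroup V] [NormedSpace ℝ V] [FiniteDimensional ℝ V]
    (A B C : Set V)
    (hC : Bornology.IsBounded C)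
    (hAclosed : IsClosed A) (hBclosed : IsClosed B)
    (hAsmul : ∀ (c : ℝ), 0 ≤ c → ∀ x ∈ A, c • x ∈ A)
    (hBsmul : ∀ (c : ℝ), 0 ≤ c → ∀ x ∈ B, c • x ∈ B)
    (hAB : (-A) ∩ B = {0}) :
    Bornology.IsBounded ((C - A) ∩ B) := by
  obtain ⟨δ, hδ, hsep⟩ :=
    exists_pos_mul_norm_le_norm_add_of_cones hAclosed hBclosed hAsmul hBsmul hAB
  obtain ⟨M, hM⟩ := isBounded_iff_forall_norm_le.mp hC
  refine isBounded_iff_forall_norm_le.mpr ⟨M / δ, ?_⟩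
  rintro _ ⟨⟨c, hc, a, ha, rfl⟩, hB⟩
  rw [le_div_iff₀ hδ, mul_comm]
  calc δ * ‖c - a‖ ≤ ‖c - a + a‖ := hsep _ hB a ha
    _ = ‖c‖ := by rw [sub_add_cancel]
    _ ≤ M := hM c hc

/-- If `C` is bounded and `A, B` are closed cones with `(-A) ∩ B = {0}`
in a finite-dimensional real normed space, then `(C - A) ∩ B` is bounded. -/
theorem bounded_inter_of_closed_cones
    {V : Type*} [NormedAddCommGroup V] [NormedSpace ℝ V] [FiniteDimensional ℝ V]
    (A B C : Set V)
    (hC : Bornology.IsBounded C)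
    (hAclosed : IsClosed A) (hBclosed : IsClosed B)
    (hAadd : ∀ x ∈ A, ∀ y ∈ A, x + y ∈ A)
    (hAsmul : ∀ (c : ℝ), 0 ≤ c → ∀ x ∈ A, c • x ∈ A)
    (hA0 : (0 : V) ∈ A)
    (hBadd : ∀ x ∈ B, ∀ y ∈ B, x + y ∈ B)
    (hBsmul : ∀ (c : ℝ), 0 ≤ c → ∀ x ∈ B, c • x ∈ B)
    (hB0 : (0 : V) ∈ B)
    (hAB : (-A) ∩ B = {0}) :
    Bornology.IsBounded ((C - A) ∩ B) :=
  bounded_inter_of_closed_cones_general A B C hC hAclosed hBclosed hAsmul hBsmul hAB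
end

section
/- Let S be a real subspace of the Hermitian d×d complex matrices. Then S contains a positive definite matrix if and only if every nonzero element of the orthogonal complement S⊥ (with respect to the trace inner product) is indefinite (neither positive semidefinite nor negative semidefinite). -/
/-!
If `X ∈ S` is positive definite and `Y ⊥ S` is semidefinite, write `X = C⋆C` with `C`
invertible; then `0 = tr (Y X) = tr (C Y C⋆)` is the trace of a semidefinite matrix, so
`C Y C⋆ = 0` and `Y = 0`.

Conversely, if `S` contains no positive definite matrix, it misses the open convex cone of
matrices `A` with `re (x⋆ A x) > 0` for all `x ≠ 0`. Hahn–Banach separation gives a real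
functional that vanishes on `S` and is negative on the cone, hence nonpositive on semidefinite
matrices. Representing it through the trace pairing as `-re tr (W ·)` with `W` Hermitian yields
a nonzero `W ⊥ S` which is positive semidefinite.
-/

open Matrix Filter Topology
open scoped ComplexOrder

instance Matrix.locallyConvexSpace {𝕜 E m n : Type*} [Semiring 𝕜] [PartialOrder 𝕜]
    [AddCommMonoid E] [TopologicalSpace E] [Module 𝕜 E] [LocallyConvexSpace 𝕜 E] :
    LocallyConvexSpace 𝕜 (Matrix m n E) :=
  Pi.locallyConvexSpace

theorem LinearMap.apply_eq_zero_of_forall_mem_le {E : Type*} [AddCommGroup E] [Module ℝ E]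
    (f : E →ₗ[ℝ] ℝ) {p : Submodule ℝ E} {u : ℝ} (h : ∀ x ∈ p, u ≤ f x) {x : E} (hx : x ∈ p) :
    f x = 0 := by
  by_contra hfx
  have := h (((u - 1) / f x) • x) (p.smul_mem _ hx)
  rw [map_smul, smul_eq_mul, div_mul_cancel₀ _ hfx] at this
  linarith

namespace Matrix

variable {m n 𝕜 : Type*} [Fintype m] [Fintype n] [RCLike 𝕜]

theorem trace_mul_vecMulVec {R : Type*} [NonUnitalCommSemiring R] (A : Matrix n n R)
    (a b : n → R) : (A * vecMulVec a b).trace = b ⬝ᵥ A *ᵥ a := by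
  simp only [trace, diag, mul_apply, vecMulVec_apply, dotProduct, mulVec, Finset.mul_sum]
  exact Finset.sum_congr rfl fun _ _ => Finset.sum_congr rfl fun _ _ => by ac_rfl

theorem IsHermitian.ofReal_re_trace_mul {A B : Matrix n n 𝕜} (hA : A.IsHermitian)
    (hB : B.IsHermitian) : (RCLike.re (A * B).trace : 𝕜) = (A * B).trace := by
  rw [← RCLike.conj_eq_iff_re, starRingEnd_apply, ← trace_conjTranspose, conjTranspose_mul,
    hA.eq, hB.eq, trace_mul_comm]

theorem re_trace_conjTranspose_mul_self_eq_zero_iff {A : Matrix m n 𝕜} :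
    RCLike.re (Aᴴ * A).trace = 0 ↔ A = 0 := by
  obtain ⟨-, him⟩ := RCLike.nonneg_iff.mp (posSemidef_conjTranspose_mul_self A).trace_nonneg
  rw [← trace_conjTranspose_mul_self_eq_zero_iff, RCLike.ext_iff (z := (Aᴴ * A).trace)]
  simp [him]

open scoped MatrixOrder in
theorem PosSemidef.trace_mul_posDef_eq_zero_iff [DecidableEq n] {A X : Matrix n n 𝕜}
    (hA : A.PosSemidef) (hX : X.PosDef) : (A * X).trace = 0 ↔ A = 0 := by
  refine ⟨fun h => ?_, fun h => by simp [h]⟩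
  obtain ⟨C, hC, rfl⟩ :=
    CStarAlgebra.isStrictlyPositive_iff_eq_star_mul_self.mp (isStrictlyPositive_iff_posDef.mpr hX)
  have hCAC : C * A * Cᴴ = 0 := by
    rw [← (hA.mul_mul_conjTranspose_same C).trace_eq_zero_iff, trace_mul_cycle, ← h,
      star_eq_conjTranspose, trace_mul_comm]
  rwa [mul_assoc, hC.mul_right_eq_zero, ← star_eq_conjTranspose, hC.star.mul_left_eq_zero] at hCAC

theorem exists_isHermitian_re_trace_mul_eq (f : Matrix n n 𝕜 →ₗ[ℝ] ℝ) :
    ∃ W : Matrix n n 𝕜, W.IsHermitian ∧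
      ∀ M : Matrix n n 𝕜, M.IsHermitian → RCLike.re (W * M).trace = f M := by
  let H := selfAdjoint.submodule ℝ (Matrix n n 𝕜)
  let Φ : H →ₗ[ℝ] Module.Dual ℝ H := LinearMap.mk₂ ℝ (fun A B => RCLike.re (A.1 * B.1).trace)
    (by simp [add_mul]) (by simp [RCLike.smul_re]) (by simp [mul_add]) (by simp [RCLike.smul_re])
  have hΦ : Function.Injective Φ := by
    refine (injective_iff_map_eq_zero Φ).mpr fun W hW => Subtype.ext ?_
    have hWW : RCLike.re ((W : Matrix n n 𝕜)ᴴ * W).trace = 0 := by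
      rw [show (W : Matrix n n 𝕜)ᴴ = W from W.2]
      exact LinearMap.congr_fun hW W
    exact re_trace_conjTranspose_mul_self_eq_zero_iff.mp hWW
  obtain ⟨W, hW⟩ := (LinearMap.injective_iff_surjective_of_finrank_eq_finrank
    Subspace.dual_finrank_eq.symm).mp hΦ (f ∘ₗ H.subtype)
  exact ⟨W, W.2, fun M hM => LinearMap.congr_fun hW ⟨M, hM⟩⟩

variable (n 𝕜) in
/-- Unlike `PosDef`, membership is an open condition on all matrices, Hermitian or not. -/
def strictlyAccretive : Set (Matrix n n 𝕜) :=
  {A | ∀ x : n → 𝕜, x ≠ 0 → 0 < RCLike.re (star x ⬝ᵥ A *ᵥ x)}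

theorem re_dotProduct_mulVec_smul (A : Matrix n n 𝕜) (x : n → 𝕜) (c : ℝ) :
    RCLike.re (star (c • x) ⬝ᵥ A *ᵥ (c • x)) = c ^ 2 * RCLike.re (star x ⬝ᵥ A *ᵥ x) := by
  simp [mulVec_smul, star_smul, sq, mul_assoc, RCLike.smul_re]

theorem convex_strictlyAccretive : Convex ℝ (strictlyAccretive n 𝕜) := by
  intro A hA B hB a b ha hb hab x hx
  have hsum : RCLike.re (star x ⬝ᵥ (a • A + b • B) *ᵥ x) =
      a * RCLike.re (star x ⬝ᵥ A *ᵥ x) + b * RCLike.re (star x ⬝ᵥ B *ᵥ x) := by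
    simp [add_mulVec, smul_mulVec, RCLike.smul_re]
  rw [hsum]
  rcases ha.eq_or_lt with rfl | ha
  · simpa [show b = 1 by linarith] using hB x hx
  · have := hA x hx; have := hB x hx; positivity

theorem isOpen_strictlyAccretive : IsOpen (strictlyAccretive n 𝕜) := by
  have hsphere : strictlyAccretive n 𝕜 =
      {A | ∀ x ∈ Metric.sphere (0 : n → 𝕜) 1, 0 < RCLike.re (star x ⬝ᵥ A *ᵥ x)} := by
    ext A
    refine ⟨fun hA x hx => hA x (ne_zero_of_mem_sphere one_ne_zero ⟨x, hx⟩), fun hA x hx => ?_⟩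
    have hx' : 0 < ‖x‖ := norm_pos_iff.mpr hx
    have h := hA (‖x‖⁻¹ • x) (by simp [norm_smul, hx'.ne'])
    rw [re_dotProduct_mulVec_smul] at h
    exact pos_of_mul_pos_right h (by positivity)
  rw [hsphere, isOpen_iff_eventually]
  intro A hA
  refine (isCompact_sphere 0 1).eventually_forall_of_forall_eventually fun x hx => ?_
  have hcont : Continuous fun p : Matrix n n 𝕜 × (n → 𝕜) =>
      RCLike.re (star p.2 ⬝ᵥ p.1 *ᵥ p.2) := by
    fun_prop
  exact hcont.continuousAt.eventually (lt_mem_nhds (hA x hx))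

theorem IsHermitian.posDef_of_mem_strictlyAccretive {A : Matrix n n 𝕜} (hA : A.IsHermitian)
    (h : A ∈ strictlyAccretive n 𝕜) : A.PosDef :=
  .of_dotProduct_mulVec_pos hA fun x hx =>
    RCLike.pos_iff.mpr ⟨h x hx, hA.im_star_dotProduct_mulVec_self x⟩

theorem smul_one_mem_strictlyAccretive [DecidableEq n] {c : ℝ} (hc : 0 < c) :
    c • (1 : Matrix n n 𝕜) ∈ strictlyAccretive n 𝕜 := by
  intro x hx
  simpa [smul_mulVec, RCLike.smul_re] using
    mul_pos hc (RCLike.pos_iff.mp (dotProduct_star_self_pos_iff.mpr hx)).1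

theorem PosSemidef.add_mem_strictlyAccretive {A P : Matrix n n 𝕜}
    (hA : A ∈ strictlyAccretive n 𝕜) (hP : P.PosSemidef) : A + P ∈ strictlyAccretive n 𝕜 := by
  intro x hx
  have := hP.re_dotProduct_nonneg x
  have := hA x hx
  simp only [add_mulVec, dotProduct_add, map_add]
  positivity

theorem PosSemidef.mem_closure_strictlyAccretive [DecidableEq n] {P : Matrix n n 𝕜}
    (hP : P.PosSemidef) : P ∈ closure (strictlyAccretive n 𝕜) := by
  have hlim : Tendsto (fun ε : ℝ => ε • (1 : Matrix n n 𝕜) + P) (𝓝[>] 0) (𝓝 P) := by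
    have hc : Continuous fun ε : ℝ => ε • (1 : Matrix n n 𝕜) + P := by fun_prop
    simpa using (hc.tendsto 0).mono_left nhdsWithin_le_nhds
  exact mem_closure_of_tendsto hlim (eventually_nhdsWithin_of_forall fun ε hε =>
    hP.add_mem_strictlyAccretive (smul_one_mem_strictlyAccretive hε))

theorem exists_posSemidef_ne_zero_trace_mul_eq_zero [DecidableEq n]
    (S : Submodule ℝ (Matrix n n 𝕜)) (hSh : ∀ M ∈ S, M.IsHermitian) (hS : ∀ X ∈ S, ¬X.PosDef) :
    ∃ W : Matrix n n 𝕜, W.PosSemidef ∧ W ≠ 0 ∧ ∀ M ∈ S, (W * M).trace = 0 := by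
  have hdisj : Disjoint (strictlyAccretive n 𝕜) S := Set.disjoint_right.mpr fun M hM hMs =>
    hS M hM ((hSh M hM).posDef_of_mem_strictlyAccretive hMs)
  obtain ⟨f, u, hfs, hfS⟩ :=
    geometric_hahn_banach_open (s := strictlyAccretive n 𝕜) convex_strictlyAccretive
      isOpen_strictlyAccretive S.convex hdisj
  have hf0 : ∀ M ∈ S, f M = 0 := fun M hM => f.toLinearMap.apply_eq_zero_of_forall_mem_le hfS hM
  have hu : u ≤ 0 := by simpa using hfS 0 S.zero_mem
  have hfP : ∀ P : Matrix n n 𝕜, P.PosSemidef → f P ≤ 0 := fun P hP =>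
    le_trans (closure_minimal (fun A hA => (hfs A hA).le)
      (isClosed_le f.continuous continuous_const) hP.mem_closure_strictlyAccretive) hu
  obtain ⟨W, hW, hWf⟩ := exists_isHermitian_re_trace_mul_eq (-f.toLinearMap)
  refine ⟨W, PosSemidef.of_dotProduct_mulVec_nonneg hW fun x => ?_, ?_, fun M hM => ?_⟩
  · have hP := posSemidef_vecMulVec_self_star x
    rw [← trace_mul_vecMulVec, ← hW.ofReal_re_trace_mul hP.isHermitian, hWf _ hP.isHermitian]
    simpa using hfP _ hP
  · rintro rfl
    have hf1 : f 1 = 0 := by simpa using hWf 1 isHermitian_one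
    have := hfs 1 (by simpa using smul_one_mem_strictlyAccretive (n := n) (𝕜 := 𝕜) one_pos)
    linarith
  · rw [← hW.ofReal_re_trace_mul (hSh M hM), hWf M (hSh M hM)]
    simp [hf0 M hM]

end Matrix

/-- A real subspace `S` of Hermitian `d×d` complex matrices contains a positive
definite matrix iff every nonzero Hermitian element of its orthogonal complement (w.r.t. the
trace inner product) is indefinite (neither psd nor nsd). -/
theorem definite_iff_orthocomplement_indefinite
    {d : ℕ} (S : Submodule ℝ (Matrix (Fin d) (Fin d) ℂ))
    (hSh : ∀ M ∈ S, M.IsHermitian) :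
    (∃ X ∈ S, X.PosDef) ↔
      ∀ Y : Matrix (Fin d) (Fin d) ℂ, Y.IsHermitian →
        (∀ M ∈ S, (Yᴴ * M).trace = 0) → Y ≠ 0 →
        ¬ Y.PosSemidef ∧ ¬ (-Y).PosSemidef := by
  constructor
  · rintro ⟨X, hXS, hX⟩ Y hY hYS hY0
    have hYX : (Y * X).trace = 0 := hY.eq ▸ hYS X hXS
    have hnegYX : (-Y * X).trace = 0 := by simp [hYX]
    exact ⟨fun hYpsd => hY0 ((hYpsd.trace_mul_posDef_eq_zero_iff hX).mp hYX),
      fun hYnsd => hY0 (neg_eq_zero.mp ((hYnsd.trace_mul_posDef_eq_zero_iff hX).mp hnegYX))⟩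
  · intro hindef
    by_contra! hS
    obtain ⟨W, hW, hW0, hWS⟩ := exists_posSemidef_ne_zero_trace_mul_eq_zero S hSh hS
    exact (hindef W hW.isHermitian (fun M hM => hW.isHermitian.eq.symm ▸ hWS M hM) hW0).1 hW
end

section
/- For any d ∈ ℕ, setting t = 2d⁴, for any finite list W₁,…,W_N of d×d complex matrices there exist V₁,…,V_t ∈ M_d(ℂ), each a nonnegative real multiple of some W_i, such that ∑_{i=1}^N W_i* M W_i = ∑_{i=1}^t V_i* M V_i for all M ∈ M_d(ℂ). -/
/-!
The conjugation maps `M ↦ Wᴴ M W` are vectors of the real space of `ℂ`-linear endomorphisms of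
`M_d(ℂ)`, whose real dimension is `2d⁴`. Their sum lies in the convex cone they span, so by
Carathéodory's theorem for cones it is a nonnegative combination `∑ cₖ • (M ↦ Wₖᴴ M Wₖ)` of at
most `2d⁴` of them, and `c • (M ↦ Wᴴ M W)` is conjugation by `√c • W`.
-/

open Matrix Module Finset

section ConicCaratheodory

variable {𝕜 E ι : Type*} [Field 𝕜] [LinearOrder 𝕜] [IsStrictOrderedRing 𝕜]
  [AddCommGroup E] [Module 𝕜 E] {v : ι → E}

/-- Carathéodory's elimination step: moving along a nontrivial relation `g` until the first
coefficient hits zero keeps the combination nonnegative and drops one vector. -/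
theorem exists_nonneg_sum_erase_eq_of_sum_smul_eq_zero [DecidableEq ι] {s : Finset ι}
    {c g : ι → 𝕜} (hc : ∀ i ∈ s, 0 ≤ c i) (hg : ∑ i ∈ s, g i • v i = 0)
    (hpos : ∃ i ∈ s, 0 < g i) :
    ∃ i₀ ∈ s, ∃ c' : ι → 𝕜, (∀ i ∈ s.erase i₀, 0 ≤ c' i) ∧
      ∑ i ∈ s, c i • v i = ∑ i ∈ s.erase i₀, c' i • v i := by
  obtain ⟨i₀, hi₀, hmin⟩ := exists_min_image {i ∈ s | 0 < g i} (fun i => c i / g i)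
    (by simpa [Finset.Nonempty] using hpos)
  rw [mem_filter] at hi₀
  set α := c i₀ / g i₀
  have hα : 0 ≤ α := div_nonneg (hc i₀ hi₀.1) hi₀.2.le
  refine ⟨i₀, hi₀.1, fun i => c i - α * g i, fun i hi => ?_, ?_⟩
  · have hi := mem_of_mem_erase hi
    rcases le_or_gt (g i) 0 with hgi | hgi
    · nlinarith [hc i hi]
    · have := hmin i (mem_filter.mpr ⟨hi, hgi⟩)
      rw [le_div_iff₀ hgi] at this
      linarith
  · have hzero : (c i₀ - α * g i₀) • v i₀ = 0 := by
      rw [div_mul_cancel₀ _ hi₀.2.ne', sub_self, zero_smul]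
    rw [sum_erase s (f := fun i => (c i - α * g i) • v i) hzero]
    simp only [sub_smul, sum_sub_distrib, mul_smul, ← smul_sum, hg, smul_zero, sub_zero]

theorem exists_nonneg_sum_erase_eq_of_not_linearIndepOn [DecidableEq ι] {s : Finset ι}
    {c : ι → 𝕜} (hc : ∀ i ∈ s, 0 ≤ c i) (hs : ¬LinearIndepOn 𝕜 v s) :
    ∃ i₀ ∈ s, ∃ c' : ι → 𝕜, (∀ i ∈ s.erase i₀, 0 ≤ c' i) ∧
      ∑ i ∈ s, c i • v i = ∑ i ∈ s.erase i₀, c' i • v i := by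
  obtain ⟨g, hg, i, hi, hgi⟩ := not_linearIndepOn_finset_iff.mp hs
  rcases hgi.lt_or_gt with hneg | hpos
  · refine exists_nonneg_sum_erase_eq_of_sum_smul_eq_zero hc (g := -g) ?_ ⟨i, hi, by simpa⟩
    simp [neg_smul, hg]
  · exact exists_nonneg_sum_erase_eq_of_sum_smul_eq_zero hc hg ⟨i, hi, hpos⟩

variable [FiniteDimensional 𝕜 E]

/-- **Carathéodory's theorem for cones**. -/
theorem exists_subset_card_le_finrank_nonneg_sum_eq (s : Finset ι) (c : ι → 𝕜)
    (hc : ∀ i ∈ s, 0 ≤ c i) :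
    ∃ t ⊆ s, #t ≤ finrank 𝕜 E ∧ ∃ c' : ι → 𝕜, (∀ i ∈ t, 0 ≤ c' i) ∧
      ∑ i ∈ s, c i • v i = ∑ i ∈ t, c' i • v i := by
  classical
  induction s using Finset.strongInduction generalizing c with
  | H s ih =>
    by_cases hli : LinearIndepOn 𝕜 v s
    · exact ⟨s, subset_rfl, by simpa using hli.fintype_card_le_finrank, c, hc, rfl⟩
    · obtain ⟨i₀, hi₀, c', hc', hsum⟩ := exists_nonneg_sum_erase_eq_of_not_linearIndepOn hc hli
      obtain ⟨t, hts, ht, c'', hc'', hsum'⟩ := ih _ (erase_ssubset hi₀) c' hc'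
      exact ⟨t, hts.trans (erase_subset _ _), ht, c'', hc'', hsum.trans hsum'⟩

theorem exists_fin_nonneg_sum_smul_eq_of_finrank_le [Fintype ι] [Nonempty ι] {n : ℕ}
    (hn : finrank 𝕜 E ≤ n) (c : ι → 𝕜) (hc : ∀ i, 0 ≤ c i) :
    ∃ (σ : Fin n → ι) (b : Fin n → 𝕜), (∀ k, 0 ≤ b k) ∧
      ∑ i, c i • v i = ∑ k, b k • v (σ k) := by
  classical
  obtain ⟨t, -, ht, c', hc', hsum⟩ :=
    exists_subset_card_le_finrank_nonneg_sum_eq (v := v) univ c fun i _ => hc i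
  obtain ⟨e⟩ := Function.Embedding.nonempty_of_card_le (α := t) (β := Fin n)
    (by simpa using ht.trans hn)
  refine ⟨Function.extend e Subtype.val fun _ => Classical.arbitrary ι,
    Function.extend e (fun i => c' i) 0, fun k => ?_, ?_⟩
  · by_cases hk : ∃ i, e i = k
    · obtain ⟨i, rfl⟩ := hk
      simpa [e.injective.extend_apply] using hc' i i.2
    · simp [Function.extend_apply' _ _ _ hk]
  · rw [hsum, ← sum_coe_sort t]
    refine Fintype.sum_of_injective e e.injective _ _ (fun k hk => ?_) fun i => ?_
    · rw [Function.extend_apply' _ _ _ hk, Pi.zero_apply, zero_smul]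
    · simp [e.injective.extend_apply]

end ConicCaratheodory

theorem finrank_real_matrix_linearMap (n : Type*) [Fintype n] :
    finrank ℝ (Matrix n n ℂ →ₗ[ℂ] Matrix n n ℂ) = 2 * Fintype.card n ^ 4 := by
  rw [← finrank_mul_finrank ℝ ℂ, Complex.finrank_real_complex, finrank_linearMap,
    finrank_matrix, finrank_self]
  ring

theorem mulLeftRight_conjTranspose_sqrt_smul {n : Type*} [Fintype n] [DecidableEq n] {r : ℝ}
    (hr : 0 ≤ r) (W : Matrix n n ℂ) :
    LinearMap.mulLeftRight ℂ (((√r : ℂ) • W)ᴴ, (√r : ℂ) • W)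
      = r • LinearMap.mulLeftRight ℂ (Wᴴ, W) := by
  ext M : 1
  simp only [Complex.coe_smul, conjTranspose_smul, star_trivial, LinearMap.mulLeftRight_apply,
    LinearMap.smul_apply, Matrix.smul_mul, Matrix.mul_smul, smul_smul, Real.mul_self_sqrt hr]

/-- Carathéodory-type bound: for any `d` and any matrices `W₁,…,W_N ∈ M_d(ℂ)`
(`N ≥ 1`), there are `t = 2d⁴` matrices `V₁,…,V_t`, each a nonnegative real multiple of some
`W_i`, with `∑ Wᵢᴴ M Wᵢ = ∑ Vᵢᴴ M Vᵢ` for all `M`. -/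
theorem caratheodory_conjugation_bound
    (d N : ℕ) (hN : 0 < N) (W : Fin N → Matrix (Fin d) (Fin d) ℂ) :
    ∃ V : Fin (2 * d ^ 4) → Matrix (Fin d) (Fin d) ℂ,
      (∀ i, ∃ c : ℝ, 0 ≤ c ∧ ∃ j, V i = (c : ℂ) • W j) ∧
      (∀ M : Matrix (Fin d) (Fin d) ℂ,
        ∑ i, (W i)ᴴ * M * W i = ∑ i, (V i)ᴴ * M * V i) := by
  have : Nonempty (Fin N) := ⟨⟨0, hN⟩⟩
  have hdim : finrank ℝ (Matrix (Fin d) (Fin d) ℂ →ₗ[ℂ] Matrix (Fin d) (Fin d) ℂ) = 2 * d ^ 4 := by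
    rw [finrank_real_matrix_linearMap, Fintype.card_fin]
  obtain ⟨σ, b, hb, hsum⟩ := exists_fin_nonneg_sum_smul_eq_of_finrank_le
    (v := fun j => LinearMap.mulLeftRight ℂ ((W j)ᴴ, W j)) hdim.le (fun _ => 1) fun _ => zero_le_one
  refine ⟨fun k => (√(b k) : ℂ) • W (σ k), fun k => ⟨√(b k), Real.sqrt_nonneg _, σ k, rfl⟩,
    fun M => ?_⟩
  simp only [one_smul, ← mulLeftRight_conjTranspose_sqrt_smul (hb _)] at hsum
  simpa only [LinearMap.sum_apply, LinearMap.mulLeftRight_apply] using LinearMap.congr_fun hsum M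
end

section
/- Let A be a bounded self-adjoint operator on a Hilbert space H, B a bounded operator from K to H, and C a bounded self-adjoint operator on K. If A ≥ ε·id_H for some ε > 0, then with λ = 2‖B‖²/ε + ε/2 + ‖C‖, the block operator [[A, B],[B*, C + λ·id_K]] satisfies [[A, B],[B*, C + λ·id_K]] ≥ (ε/2)·id_{H⊕K}. -/
/-!
Expanding the quadratic form, the off-diagonal blocks contribute `2 Re ⟪B k, h⟫ ≥ -2‖B‖‖h‖‖k‖`,
and by weighted AM-GM this is absorbed by half of `ε‖h‖²` together with the `2‖B‖²/ε · ‖k‖²`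
part of the shift `λ`; the `‖C‖` part of `λ` compensates `Re ⟪C k, k⟫ ≥ -‖C‖‖k‖²`, which
leaves `ε/2` on both components.
-/

open ContinuousLinearMap

section InnerBounds

variable {𝕜 F : Type*} [RCLike 𝕜] [NormedAddCommGroup F] [InnerProductSpace 𝕜 F]

local notation "⟪" x ", " y "⟫" => inner 𝕜 x y

theorem ContinuousLinearMap.neg_opNorm_mul_le_re_inner {E : Type*} [NormedAddCommGroup E]
    [NormedSpace 𝕜 E] (T : E →L[𝕜] F) (x : E) (y : F) :
    -(‖T‖ * ‖x‖ * ‖y‖) ≤ RCLike.re ⟪T x, y⟫ := by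
  have hinner : |RCLike.re ⟪T x, y⟫| ≤ ‖T x‖ * ‖y‖ :=
    (RCLike.abs_re_le_norm _).trans (norm_inner_le_norm _ _)
  have hop : ‖T x‖ * ‖y‖ ≤ ‖T‖ * ‖x‖ * ‖y‖ := by gcongr; exact T.le_opNorm x
  linarith [neg_abs_le (RCLike.re ⟪T x, y⟫)]

theorem re_inner_real_smul_self [Module ℝ F] [IsScalarTower ℝ 𝕜 F] (r : ℝ) (x : F) :
    RCLike.re ⟪r • x, x⟫ = r * ‖x‖ ^ 2 := by
  rw [RCLike.real_smul_eq_coe_smul (K := 𝕜), inner_smul_real_left, RCLike.smul_re,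
    inner_self_eq_norm_sq]

end InnerBounds

theorem two_mul_mul_mul_le_add_sq_of_pos {ε : ℝ} (hε : 0 < ε) (b x y : ℝ) :
    2 * b * x * y ≤ ε / 2 * x ^ 2 + 2 * b ^ 2 / ε * y ^ 2 := by
  have hsq : 0 ≤ (ε * x - 2 * b * y) ^ 2 / (2 * ε) := by positivity
  have hexpand : (ε * x - 2 * b * y) ^ 2 / (2 * ε)
      = ε / 2 * x ^ 2 + 2 * b ^ 2 / ε * y ^ 2 - 2 * b * x * y := by
    field_simp; ring
  linarith

theorem block_operator_lower_bound_general
    {H K : Type*}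
    [NormedAddCommGroup H] [InnerProductSpace ℂ H] [CompleteSpace H]
    [NormedAddCommGroup K] [InnerProductSpace ℂ K] [CompleteSpace K]
    (A : H →L[ℂ] H) (B : K →L[ℂ] H) (C : K →L[ℂ] K)
    (ε : ℝ) (hε : 0 < ε)
    (hAlb : ∀ h : H, ε * ‖h‖ ^ 2 ≤ (inner ℂ (A h) h : ℂ).re) :
    ∀ (h : H) (k : K),
      ε / 2 * (‖h‖ ^ 2 + ‖k‖ ^ 2) ≤
        ((inner ℂ (A h + B k) h : ℂ) +
          (inner ℂ ((ContinuousLinearMap.adjoint B) h + C k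
            + (2 * ‖B‖ ^ 2 / ε + ε / 2 + ‖C‖) • k) k : ℂ)).re := by
  intro h k
  have hadj : (inner ℂ (adjoint B h) k).re = (inner ℂ (B k) h).re := by
    rw [adjoint_inner_left]; exact inner_re_symm (𝕜 := ℂ) h (B k)
  have hBk := B.neg_opNorm_mul_le_re_inner k h
  have hCk := C.neg_opNorm_mul_le_re_inner k k
  have hshift := re_inner_real_smul_self (𝕜 := ℂ) (2 * ‖B‖ ^ 2 / ε + ε / 2 + ‖C‖) k
  have hamgm := two_mul_mul_mul_le_add_sq_of_pos hε ‖B‖ ‖h‖ ‖k‖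
  simp only [RCLike.re_to_complex] at hBk hCk hshift
  simp only [inner_add_left, Complex.add_re]
  rw [hadj, hshift]
  linarith [hAlb h]

/-- If `A ≥ ε·id_H`, then with `λ = 2‖B‖²/ε + ε/2 + ‖C‖` the block operator
`[[A, B],[B*, C + λ·id_K]]` is `≥ (ε/2)·id_{H⊕K}` (as a quadratic form). -/
theorem block_operator_lower_bound
    {H K : Type*}
    [NormedAddCommGroup H] [InnerProductSpace ℂ H] [CompleteSpace H]
    [NormedAddCommGroup K] [InnerProductSpace ℂ K] [CompleteSpace K]
    (A : H →L[ℂ] H) (B : K →L[ℂ] H) (C : K →L[ℂ] K)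
    (hA : IsSelfAdjoint A) (hC : IsSelfAdjoint C)
    (ε : ℝ) (hε : 0 < ε)
    (hAlb : ∀ h : H, ε * ‖h‖ ^ 2 ≤ (inner ℂ (A h) h : ℂ).re) :
    ∀ (h : H) (k : K),
      ε / 2 * (‖h‖ ^ 2 + ‖k‖ ^ 2) ≤
        ((inner ℂ (A h + B k) h : ℂ) +
          (inner ℂ ((ContinuousLinearMap.adjoint B) h + C k
            + (2 * ‖B‖ ^ 2 / ε + ε / 2 + ‖C‖) • k) k : ℂ)).re :=
  block_operator_lower_bound_general A B C ε hε hAlb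
end

section
/- Let p ∈ M_d(ℂ⟨x₁,…,xₙ⟩)_h, let B₁,…,B_m ∈ M_d(ℂ)_h span an indefinite subspace of the Hermitian matrices (every nonzero real linear combination is indefinite), and fix a Hilbert space H and self-adjoint T₁,…,Tₙ ∈ B(H). If there exist self-adjoint S₁,…,S_m ∈ B(H) with p(T₁,…,Tₙ) + ∑ᵢ Bᵢ ⊗ Sᵢ ≥ 0, then for all r ≤ dim H and all W₁,…,W_N ∈ M_{d,r}(ℂ) with ∑_j W_j* Bᵢ W_j = 0 for all i, one has ∑_j p_{W_j}(T₁,…,Tₙ) ≥ 0. -/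
open Matrix
open scoped ComplexOrder

noncomputable section

/-- A free matrix polynomial of size `d` in `n` Hermitian variables:
a finitely supported assignment of a coefficient matrix to each word. -/
abbrev FreePoly (n d : ℕ) := (List (Fin n)) →₀ Matrix (Fin d) (Fin d) ℂ

/-- Evaluation of a word at a tuple of operators. -/
def wordEval {n : ℕ} {H : Type*} [NormedAddCommGroup H] [InnerProductSpace ℂ H]
    (T : Fin n → H →L[ℂ] H) : List (Fin n) → (H →L[ℂ] H)
  | [] => 1
  | i :: w => T i * wordEval T w

/-- Evaluation of a free matrix polynomial at operators `T`, as a `d×d` matrix of operators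
(representing an operator on `ℂ^d ⊗ H`). -/
def evalOp {n d : ℕ} {H : Type*} [NormedAddCommGroup H] [InnerProductSpace ℂ H]
    (p : FreePoly n d) (T : Fin n → H →L[ℂ] H) :
    Matrix (Fin d) (Fin d) (H →L[ℂ] H) :=
  Matrix.of fun i j => ∑ w ∈ p.support, (p w i j) • wordEval T w

/-- The polynomial `p_W = ∑_ω Wᴴ P_ω W ⊗ ω` for `W ∈ M_{d,r}(ℂ)`. -/
def compressPoly {n d r : ℕ} (p : FreePoly n d) (W : Matrix (Fin d) (Fin r) ℂ) :
    FreePoly n r :=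
  Finsupp.mapRange (fun P => Wᴴ * P * W) (by simp) p

/-- The Kronecker product `B ⊗ S` as a matrix of operators. -/
def kron {d : ℕ} {H : Type*} [NormedAddCommGroup H] [InnerProductSpace ℂ H]
    (B : Matrix (Fin d) (Fin d) ℂ) (S : H →L[ℂ] H) :
    Matrix (Fin d) (Fin d) (H →L[ℂ] H) :=
  Matrix.of fun i j => (B i j) • S

/-- A matrix of operators is positive semidefinite (as an operator on `ℂ^d ⊗ H`). -/
def OpMatNonneg {d : ℕ} {H : Type*} [NormedAddCommGroup H] [InnerProductSpace ℂ H]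
    (M : Matrix (Fin d) (Fin d) (H →L[ℂ] H)) : Prop :=
  ∀ v : Fin d → H, 0 ≤ (∑ i, ∑ j, (inner ℂ (M i j (v j)) (v i) : ℂ)).re

/-- A matrix of operators is bounded below by `ε · id` (as an operator on `ℂ^d ⊗ H`). -/
def OpMatGe {d : ℕ} {H : Type*} [NormedAddCommGroup H] [InnerProductSpace ℂ H]
    (ε : ℝ) (M : Matrix (Fin d) (Fin d) (H →L[ℂ] H)) : Prop :=
  ∀ v : Fin d → H, ε * ∑ i, ‖v i‖ ^ 2 ≤ (∑ i, ∑ j, (inner ℂ (M i j (v j)) (v i) : ℂ)).re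

/-- A free matrix polynomial is Hermitian: `p* = p`, i.e. `(P_ω)ᴴ = P_{ω reversed}`. -/
def FreePoly.IsHermitian {n d : ℕ} (p : FreePoly n d) : Prop :=
  ∀ w : List (Fin n), (p w)ᴴ = p w.reverse

end

/-! Compressing by `W ⊗ id_H` turns the quadratic form of `p(T)` into that of `p_W(T)` and the
form of `B ⊗ S` into that of `(Wᴴ B W) ⊗ S`. Summing over `j`, the hypothesis
`∑_j W_jᴴ Bᵢ W_j = 0` kills every `Bᵢ ⊗ Sᵢ` term, so the form of `∑_j p_{W_j}(T)` at `v` is the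
sum over `j` of the form of the positive operator `p(T) + ∑ᵢ Bᵢ ⊗ Sᵢ` at `(W_j ⊗ id) v`. -/

open Finset

noncomputable section

variable {H : Type*} [NormedAddCommGroup H] [InnerProductSpace ℂ H]

def opMatForm {k : ℕ} (M : Matrix (Fin k) (Fin k) (H →L[ℂ] H)) (v : Fin k → H) : ℂ :=
  ∑ i, ∑ j, inner ℂ (M i j (v j)) (v i)

theorem opMatNonneg_iff {k : ℕ} (M : Matrix (Fin k) (Fin k) (H →L[ℂ] H)) :
    OpMatNonneg M ↔ ∀ v, 0 ≤ (opMatForm M v).re :=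
  Iff.rfl

theorem opMatForm_add {k : ℕ} (M M' : Matrix (Fin k) (Fin k) (H →L[ℂ] H)) (v : Fin k → H) :
    opMatForm (M + M') v = opMatForm M v + opMatForm M' v := by
  simp only [opMatForm, Matrix.add_apply, _root_.add_apply, inner_add_left,
    sum_add_distrib]

theorem opMatForm_sum {k : ℕ} {ι : Type*} (s : Finset ι)
    (M : ι → Matrix (Fin k) (Fin k) (H →L[ℂ] H)) (v : Fin k → H) :
    opMatForm (∑ j ∈ s, M j) v = ∑ j ∈ s, opMatForm (M j) v := by
  simp only [opMatForm, Matrix.sum_apply, _root_.sum_apply, sum_inner]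
  exact (sum_comm.trans (sum_congr rfl fun _ _ => sum_comm)).symm

/-- The action of a scalar `d × r` matrix on `ℂ^r ⊗ H`, i.e. `W ⊗ id_H`. -/
def scalarMulVec {d r : ℕ} (W : Matrix (Fin d) (Fin r) ℂ) (v : Fin r → H) : Fin d → H :=
  fun a => ∑ t, W a t • v t

theorem kron_zero_left {d : ℕ} (S : H →L[ℂ] H) : kron (0 : Matrix (Fin d) (Fin d) ℂ) S = 0 := by
  ext1 i j
  simp [kron]

theorem kron_sum_left {d : ℕ} {ι : Type*} (s : Finset ι) (C : ι → Matrix (Fin d) (Fin d) ℂ)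
    (S : H →L[ℂ] H) : kron (∑ j ∈ s, C j) S = ∑ j ∈ s, kron (C j) S := by
  ext1 i j
  simp [kron, Matrix.sum_apply, sum_smul]

theorem opMatForm_kron_scalarMulVec {d r : ℕ} (C : Matrix (Fin d) (Fin d) ℂ) (S : H →L[ℂ] H)
    (W : Matrix (Fin d) (Fin r) ℂ) (v : Fin r → H) :
    opMatForm (kron C S) (scalarMulVec W v) = opMatForm (kron (Wᴴ * C * W) S) v := by
  simp only [opMatForm, kron, scalarMulVec, Matrix.of_apply, _root_.smul_apply,
    inner_smul_left, inner_sum, sum_inner, inner_smul_right, map_sum,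
    ContinuousLinearMap.map_smul, Matrix.mul_apply, conjTranspose_apply, sum_mul, mul_sum,
    _root_.map_mul, starRingEnd_apply, star_star, mul_assoc]
  conv_lhs => enter [2, a]; rw [sum_comm]; enter [2, s]; rw [sum_comm]
  rw [sum_comm]
  refine sum_congr rfl fun s _ => ?_
  rw [sum_comm]
  exact sum_congr rfl fun t _ => sum_comm

theorem evalOp_eq_sum_kron {n d : ℕ} (p : FreePoly n d) (T : Fin n → H →L[ℂ] H)
    {s : Finset (List (Fin n))} (hs : p.support ⊆ s) :
    evalOp p T = ∑ w ∈ s, kron (p w) (wordEval T w) := by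
  ext1 i j
  simp only [evalOp, kron, Matrix.of_apply, Matrix.sum_apply]
  exact sum_subset hs fun w _ hw => by simp [Finsupp.notMem_support_iff.mp hw]

theorem opMatForm_evalOp_compressPoly {n d r : ℕ} (p : FreePoly n d) (T : Fin n → H →L[ℂ] H)
    (W : Matrix (Fin d) (Fin r) ℂ) (v : Fin r → H) :
    opMatForm (evalOp (compressPoly p W) T) v = opMatForm (evalOp p T) (scalarMulVec W v) := by
  rw [evalOp_eq_sum_kron (compressPoly p W) T Finsupp.support_mapRange,
    evalOp_eq_sum_kron p T subset_rfl, opMatForm_sum, opMatForm_sum]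
  refine sum_congr rfl fun w _ => ?_
  rw [opMatForm_kron_scalarMulVec]
  rfl

theorem sum_opMatForm_kron_scalarMulVec_eq_zero {d r N : ℕ} (C : Matrix (Fin d) (Fin d) ℂ)
    (S : H →L[ℂ] H) (W : Fin N → Matrix (Fin d) (Fin r) ℂ) (hW : ∑ j, (W j)ᴴ * C * W j = 0)
    (v : Fin r → H) : ∑ j, opMatForm (kron C S) (scalarMulVec (W j) v) = 0 := by
  simp only [opMatForm_kron_scalarMulVec, ← opMatForm_sum, ← kron_sum_left, hW, kron_zero_left]
  simp [opMatForm]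

end

theorem free_elimination_easy_direction_general
    {n d m : ℕ} {H : Type*}
    [NormedAddCommGroup H] [InnerProductSpace ℂ H] [CompleteSpace H]
    (p : FreePoly n d)
    (B : Fin m → Matrix (Fin d) (Fin d) ℂ)
    (T : Fin n → H →L[ℂ] H)
    (hex : ∃ S : Fin m → H →L[ℂ] H, (∀ i, IsSelfAdjoint (S i)) ∧
      OpMatNonneg (evalOp p T + ∑ i, kron (B i) (S i))) :
    ∀ (r N : ℕ), (r : Cardinal) ≤ Module.rank ℂ H →
      ∀ W : Fin N → Matrix (Fin d) (Fin r) ℂ,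
        (∀ i, ∑ j, (W j)ᴴ * B i * W j = 0) →
        OpMatNonneg (∑ j, evalOp (compressPoly p (W j)) T) := by
  intro r N _ W hW
  obtain ⟨S, -, hpos⟩ := hex
  refine (opMatNonneg_iff _).2 fun v => ?_
  have hkron : ∑ i, ∑ j, opMatForm (kron (B i) (S i)) (scalarMulVec (W j) v) = 0 :=
    sum_eq_zero fun i _ => sum_opMatForm_kron_scalarMulVec_eq_zero _ _ _ (hW i) v
  have hform : opMatForm (∑ j, evalOp (compressPoly p (W j)) T) v
      = ∑ j, opMatForm (evalOp p T + ∑ i, kron (B i) (S i)) (scalarMulVec (W j) v) := by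
    simp only [opMatForm_sum, opMatForm_add, opMatForm_evalOp_compressPoly, sum_add_distrib]
    rw [sum_comm (s := univ) (t := univ), hkron, add_zero]
  rw [hform, Complex.re_sum]
  exact sum_nonneg fun j _ => (opMatNonneg_iff _).1 hpos _

/-- Theorem 3.1, (i) ⇒ (ii): if `p(T) + ∑ Bᵢ ⊗ Sᵢ ≥ 0` for some self-adjoint
`Sᵢ`, where the `Bᵢ` span an indefinite subspace, then for all `r ≤ dim H` and all `W_j` with
`∑_j W_jᴴ Bᵢ W_j = 0` one has `∑_j p_{W_j}(T) ≥ 0`. -/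
theorem free_elimination_easy_direction
    {n d m : ℕ} {H : Type*}
    [NormedAddCommGroup H] [InnerProductSpace ℂ H] [CompleteSpace H]
    (p : FreePoly n d) (hp : p.IsHermitian)
    (B : Fin m → Matrix (Fin d) (Fin d) ℂ) (hBh : ∀ i, (B i).IsHermitian)
    (hind : ∀ M ∈ Submodule.span ℝ (Set.range B), M ≠ 0 →
      ¬ M.PosSemidef ∧ ¬ (-M).PosSemidef)
    (T : Fin n → H →L[ℂ] H) (hT : ∀ i, IsSelfAdjoint (T i))
    (hex : ∃ S : Fin m → H →L[ℂ] H, (∀ i, IsSelfAdjoint (S i)) ∧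
      OpMatNonneg (evalOp p T + ∑ i, kron (B i) (S i))) :
    ∀ (r N : ℕ), (r : Cardinal) ≤ Module.rank ℂ H →
      ∀ W : Fin N → Matrix (Fin d) (Fin r) ℂ,
        (∀ i, ∑ j, (W j)ᴴ * B i * W j = 0) →
        OpMatNonneg (∑ j, evalOp (compressPoly p (W j)) T) :=
  free_elimination_easy_direction_general p B T hex
end

section
/- Let S⊥ be a subspace of Hermitian d×d matrices containing no nonzero positive semidefinite matrix, and let C be the conic hull of S⊥ together with the psd cone. Then there exists a linear functional f on M_d(ℂ)_h that vanishes on S⊥ and is strictly positive on every nonzero positive semidefinite matrix. -/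
open scoped ComplexOrder

attribute [local instance] Matrix.normedAddCommGroup Matrix.normedSpace

namespace SepAux

open Matrix

variable {d : ℕ}

lemma psd_smul (c : ℝ) (hc : 0 ≤ c) {P : Matrix (Fin d) (Fin d) ℂ} (hP : P.PosSemidef) :
    (c • P).PosSemidef := by
  have hcP : c • P = (c : ℂ) • P := by
    ext i j; simp [Complex.real_smul]
  rw [hcP]
  refine Matrix.posSemidef_iff_dotProduct_mulVec.mpr ⟨?_, ?_⟩
  · rw [Matrix.IsHermitian, Matrix.conjTranspose_smul, hP.1.eq]
    congr 1
    simp [Complex.conj_ofReal]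
  · intro x
    have : star x ⬝ᵥ ((c : ℂ) • P) *ᵥ x = (c : ℂ) * (star x ⬝ᵥ P *ᵥ x) := by
      rw [Matrix.smul_mulVec, dotProduct_smul, smul_eq_mul]
    rw [this]
    exact mul_nonneg (by exact_mod_cast Complex.zero_le_real.2 hc) (hP.dotProduct_mulVec_nonneg x)

lemma psd_entry_sq_le {P : Matrix (Fin d) (Fin d) ℂ} (hP : P.PosSemidef) (i j : Fin d) :
    ‖P i j‖ ^ 2 ≤ (P i i).re * (P j j).re := by
  open scoped MatrixOrder in obtain ⟨B, hB⟩ := CStarAlgebra.nonneg_iff_eq_star_mul_self.mp hP.nonneg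
  rw [Matrix.star_eq_conjTranspose] at hB
  set x : Fin d → EuclideanSpace ℂ (Fin d) := fun i => WithLp.toLp 2 (fun k => B k i) with hx
  have hentry : ∀ i j, P i j = @inner ℂ _ _ (x i) (x j) := by
    intro i j
    rw [hB]
    simp [Matrix.mul_apply, PiLp.inner_apply, RCLike.inner_apply, hx,
      Matrix.conjTranspose_apply]
    exact Finset.sum_congr rfl fun k _ => mul_comm _ _
  have hdiag : ∀ i, (P i i).re = ‖x i‖ ^ 2 := by
    intro i
    rw [hentry i i, @inner_self_eq_norm_sq_to_K ℂ]
    norm_cast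
  have h1 : ‖P i j‖ ≤ ‖x i‖ * ‖x j‖ := by
    rw [hentry i j]; exact norm_inner_le_norm _ _
  have h2 : ‖P i j‖ ^ 2 ≤ (‖x i‖ * ‖x j‖) ^ 2 := by
    have := norm_nonneg (P i j)
    nlinarith
  rw [hdiag i, hdiag j]
  nlinarith [h2]

lemma psd_diag_re_nonneg {P : Matrix (Fin d) (Fin d) ℂ} (hP : P.PosSemidef) (i : Fin d) :
    0 ≤ (P i i).re := by
  open scoped MatrixOrder in obtain ⟨B, hB⟩ := CStarAlgebra.nonneg_iff_eq_star_mul_self.mp hP.nonneg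
  rw [Matrix.star_eq_conjTranspose] at hB
  rw [hB]
  simp only [Matrix.mul_apply, Matrix.conjTranspose_apply, Complex.re_sum]
  refine Finset.sum_nonneg fun k _ => ?_
  simpa [Complex.normSq_apply] using Complex.normSq_nonneg (B k i)

lemma psd_trace_re_nonneg {P : Matrix (Fin d) (Fin d) ℂ} (hP : P.PosSemidef) :
    0 ≤ P.trace.re := by
  rw [Matrix.trace, Complex.re_sum]
  exact Finset.sum_nonneg fun i _ => psd_diag_re_nonneg hP i

lemma psd_trace_re_pos {P : Matrix (Fin d) (Fin d) ℂ} (hP : P.PosSemidef) (h0 : P ≠ 0) :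
    0 < P.trace.re := by
  rcases lt_or_eq_of_le (psd_trace_re_nonneg hP) with h | h
  · exact h
  exfalso
  apply h0
  have hdiag : ∀ i, (P i i).re = 0 := by
    rw [Matrix.trace, Complex.re_sum] at h
    intro i
    exact (Finset.sum_eq_zero_iff_of_nonneg
      (fun i _ => psd_diag_re_nonneg hP i)).mp h.symm i (Finset.mem_univ i)
  ext i j
  have h2 := psd_entry_sq_le hP i j
  rw [hdiag i, hdiag j] at h2
  have : ‖P i j‖ = 0 := by nlinarith [norm_nonneg (P i j), sq_nonneg ‖P i j‖]
  simpa using norm_eq_zero.mp this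

lemma isClosed_psd : IsClosed {P : Matrix (Fin d) (Fin d) ℂ | P.PosSemidef} := by
  have hset : {P : Matrix (Fin d) (Fin d) ℂ | P.PosSemidef} =
      {P : Matrix (Fin d) (Fin d) ℂ | Pᴴ = P} ∩
        ⋂ x : Fin d → ℂ, {P | 0 ≤ (star x ⬝ᵥ P *ᵥ x).re} := by
    ext P
    constructor
    · intro hP
      refine ⟨hP.1, ?_⟩
      simp only [Set.mem_iInter, Set.mem_setOf_eq]
      intro x
      simpa using hP.re_dotProduct_nonneg x
    · rintro ⟨h1, h2⟩
      simp only [Set.mem_iInter, Set.mem_setOf_eq] at h1 h2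
      refine Matrix.posSemidef_iff_dotProduct_mulVec.mpr ⟨h1, fun x => ?_⟩
      have hstar : star (star x ⬝ᵥ P *ᵥ x) = star x ⬝ᵥ P *ᵥ x := by
        calc star (star x ⬝ᵥ P *ᵥ x) = star (P *ᵥ x) ⬝ᵥ star (star x) := by
              rw [Matrix.star_dotProduct_star]
          _ = (star x ᵥ* Pᴴ) ⬝ᵥ x := by rw [Matrix.star_mulVec, star_star]
          _ = star x ⬝ᵥ Pᴴ *ᵥ x := by rw [Matrix.dotProduct_mulVec]
          _ = star x ⬝ᵥ P *ᵥ x := by rw [h1]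
      have him : (star x ⬝ᵥ P *ᵥ x).im = 0 := by
        have := congrArg Complex.im hstar
        simp only [Complex.star_def, Complex.conj_im] at this
        linarith [this]
      rw [Complex.le_def]
      refine ⟨by simpa using h2 x, by simp [him]⟩
  rw [hset]
  refine IsClosed.inter (isClosed_eq continuous_id.matrix_conjTranspose continuous_id) ?_
  refine isClosed_iInter fun x => ?_
  exact isClosed_le continuous_const
    (Complex.continuous_re.comp
      ((continuous_const : Continuous fun _ => star x).dotProduct
        (continuous_id.matrix_mulVec continuous_const)))

end SepAux

open SepAux in
/-- If a real subspace `S⊥` of Hermitian matrices contains no nonzero positive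
semidefinite matrix, then there is a real-linear functional `f` on matrices vanishing on `S⊥`
and strictly positive on every nonzero positive semidefinite matrix. -/
theorem exists_separating_functional
    {d : ℕ} (Sp : Submodule ℝ (Matrix (Fin d) (Fin d) ℂ))
    (hSh : ∀ M ∈ Sp, M.IsHermitian)
    (hnopsd : ∀ M ∈ Sp, M.PosSemidef → M = 0) :
    ∃ f : Matrix (Fin d) (Fin d) ℂ →ₗ[ℝ] ℝ,
      (∀ M ∈ Sp, f M = 0) ∧
      (∀ P : Matrix (Fin d) (Fin d) ℂ, P.PosSemidef → P ≠ 0 → 0 < f P) := by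
  classical
  haveI : FiniteDimensional ℝ (Matrix (Fin d) (Fin d) ℂ) := Module.Finite.trans ℂ _
  set K : Set (Matrix (Fin d) (Fin d) ℂ) :=
    {P | P.PosSemidef ∧ P.trace.re = 1} with hK
  have htr_smul : ∀ (c : ℝ) (P : Matrix (Fin d) (Fin d) ℂ),
      (Matrix.trace (c • P)).re = c * P.trace.re := by
    intro c P
    rw [Matrix.trace_smul]
    simp [Complex.real_smul]
  have hKconv : Convex ℝ K := by
    rintro P ⟨hP, hPt⟩ Q ⟨hQ, hQt⟩ a b ha hb hab
    refine ⟨(psd_smul a ha hP).add (psd_smul b hb hQ), ?_⟩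
    rw [Matrix.trace_add, Complex.add_re, htr_smul, htr_smul, hPt, hQt]
    simpa using hab
  have hKclosed : IsClosed K := by
    refine IsClosed.inter isClosed_psd ?_
    exact isClosed_eq (Complex.continuous_re.comp continuous_id.matrix_trace) continuous_const
  have hKsub : K ⊆ Metric.closedBall 0 1 := by
    rintro P ⟨hP, hPt⟩
    rw [Metric.mem_closedBall, dist_zero_right]
    rw [Matrix.norm_le_iff zero_le_one]
    intro i j
    have hdle : ∀ k, (P k k).re ≤ 1 := by
      intro k
      rw [← hPt, Matrix.trace, Complex.re_sum]
      exact Finset.single_le_sum (fun l _ => psd_diag_re_nonneg hP l) (Finset.mem_univ k)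
    have h2 := psd_entry_sq_le hP i j
    nlinarith [norm_nonneg (P i j), psd_diag_re_nonneg hP i, psd_diag_re_nonneg hP j,
      hdle i, hdle j]
  have hKcomp : IsCompact K :=
    (isCompact_closedBall (0 : Matrix (Fin d) (Fin d) ℂ) 1).of_isClosed_subset hKclosed hKsub
  have hdisj : Disjoint K (Sp : Set (Matrix (Fin d) (Fin d) ℂ)) := by
    rw [Set.disjoint_left]
    rintro P ⟨hP, hPt⟩ hPS
    have : P = 0 := hnopsd P hPS hP
    rw [this] at hPt
    simp at hPt
  haveI : LocallyConvexSpace ℝ (Matrix (Fin d) (Fin d) ℂ) := NormedSpace.toLocallyConvexSpace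
  obtain ⟨f, u, v, hfu, huv, hfv⟩ :=
    geometric_hahn_banach_compact_closed hKconv hKcomp Sp.convex
      Sp.closed_of_finiteDimensional hdisj
  have hv0 : v < 0 := by simpa using hfv 0 Sp.zero_mem
  have hf0 : ∀ M ∈ Sp, f M = 0 := by
    intro M hM
    by_contra h
    have h1 := hfv (((v - 1) / f M) • M) (Sp.smul_mem _ hM)
    rw [map_smul, smul_eq_mul, div_mul_cancel₀ _ h] at h1
    linarith
  refine ⟨-(f : Matrix (Fin d) (Fin d) ℂ →ₗ[ℝ] ℝ), fun M hM => by simp [hf0 M hM], ?_⟩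
  intro P hP hP0
  have ht : 0 < P.trace.re := psd_trace_re_pos hP hP0
  have hQK : (P.trace.re)⁻¹ • P ∈ K := by
    refine ⟨psd_smul _ (inv_nonneg.2 ht.le) hP, ?_⟩
    rw [htr_smul, inv_mul_cancel₀ ht.ne']
  have h1 : f ((P.trace.re)⁻¹ • P) < u := hfu _ hQK
  rw [map_smul, smul_eq_mul] at h1
  have hu0 : u < 0 := lt_trans huv hv0
  have hfPneg : f P < 0 := by
    have h2 : P.trace.re * ((P.trace.re)⁻¹ * f P) < P.trace.re * u :=
      mul_lt_mul_of_pos_left h1 ht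
    rw [← mul_assoc, mul_inv_cancel₀ ht.ne', one_mul] at h2
    calc f P < P.trace.re * u := h2
      _ < 0 := mul_neg_of_pos_of_neg ht hu0
  simpa using hfPneg
end
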